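/- arXiv:1609.06575 — 5 statements merged into one kernel-verified Lean document; each statement's English description precedes it below -/
import Mathlib

section
/- Let δ > 0 and let X, Y be independent random variables, each uniformly distributed on [−δ, δ], and let k ∈ [0,1]. Define the class variable C_k = 1 if X + kY ≥ 0 and C_k = 0 otherwise. Then the mutual information MI(C_k, X²) = 0; equivalently, the joint law of (X², C_k) equals the product of the law of X² and the law of C_k (so the KL divergence of the joint law from the product of the marginals is zero). -/
open MeasureTheory ProbabilityTheory Real
open scoped Classical

/-- Kullback–Leibler divergence of `μ` from `ν` (with values in `EReal`),
defined as `+∞` unless `μ ≪ ν` and the log-likelihood ratio is `μ`-integrable. -/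
noncomputable def klDiv {α : Type*} [MeasurableSpace α] (μ ν : Measure α) : EReal :=
  if μ ≪ ν ∧ Integrable (llr μ ν) μ then ((∫ x, llr μ ν x ∂μ : ℝ) : EReal) else ⊤

/-- The uniform probability measure on the interval `[-δ, δ]`. -/
noncomputable def uniformIcc (δ : ℝ) : Measure ℝ :=
  (ENNReal.ofReal (2 * δ))⁻¹ • volume.restrict (Set.Icc (-δ) δ)

/-!
Negating both coordinates preserves the law of `(X, Y)` and the value of `X ^ 2`, and it exchanges
the half-planes `X + k Y ≥ 0` and `X + k Y ≤ 0`, whose intersection is a Lebesgue-null line.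
Hence, on every event determined by `X ^ 2`, the class `C` equals `1` with conditional probability
exactly `1 / 2`, i.e. `C` is independent of `X ^ 2`.
-/

lemma klDiv_self {α : Type*} [MeasurableSpace α] (μ : Measure α) [SigmaFinite μ] :
    klDiv μ μ = 0 := by
  have h : llr μ μ =ᵐ[μ] 0 := by
    filter_upwards [μ.rnDeriv_self] with x hx
    simp [llr, hx]
  rw [klDiv, if_pos ⟨Measure.AbsolutelyContinuous.rfl,
      (integrable_congr h).mpr (integrable_zero _ _ _)⟩, integral_congr_ae h]
  simp

lemma measure_inter_setOf_nonneg_eq_half {α : Type*} [MeasurableSpace α] {μ : Measure α}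
    {σ : α → α} {h : α → ℝ} (hσ : MeasurePreserving σ μ μ) (hh : Measurable h)
    (h_anti : ∀ x, h (σ x) = -h x) (h_zero : μ {x | h x = 0} = 0)
    {S : Set α} (hS : MeasurableSet S) (hSσ : σ ⁻¹' S = S) :
    μ (S ∩ {x | 0 ≤ h x}) = μ S / 2 := by
  have hpos : MeasurableSet (S ∩ {x | 0 ≤ h x}) := hS.inter (measurableSet_le measurable_const hh)
  have hneg : MeasurableSet (S ∩ {x | h x ≤ 0}) := hS.inter (measurableSet_le hh measurable_const)
  have h_swap : μ (S ∩ {x | 0 ≤ h x}) = μ (S ∩ {x | h x ≤ 0}) := by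
    have : σ ⁻¹' (S ∩ {x | 0 ≤ h x}) = S ∩ {x | h x ≤ 0} := by
      rw [Set.preimage_inter, hSσ]
      ext x
      simp [h_anti]
    rw [← this, hσ.measure_preimage hpos.nullMeasurableSet]
  have h_cover : μ (S ∩ {x | 0 ≤ h x}) + μ (S ∩ {x | h x ≤ 0}) = μ S := by
    have h_union : S ∩ {x | 0 ≤ h x} ∪ S ∩ {x | h x ≤ 0} = S := by
      rw [← Set.inter_union_distrib_left, Set.inter_eq_left]
      exact fun x _ => le_total 0 (h x)
    have h_overlap : μ (S ∩ {x | 0 ≤ h x} ∩ (S ∩ {x | h x ≤ 0})) = 0 :=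
      measure_mono_null (fun x hx => le_antisymm hx.2.2 hx.1.2) h_zero
    rw [← measure_union_add_inter _ hneg, h_union, h_overlap, add_zero]
  rw [ENNReal.eq_div_iff two_ne_zero ENNReal.ofNat_ne_top, two_mul]
  nth_rewrite 2 [h_swap]
  exact h_cover

lemma indepFun_indicator_of_measure_inter_eq_mul {Ω β M : Type*} [MeasurableSpace Ω]
    [MeasurableSpace β] [Zero M] [MeasurableSpace M] {μ : Measure Ω}
    [IsZeroOrProbabilityMeasure μ]
    {f : Ω → β} (hf : Measurable f) {A : Set Ω} (hA : MeasurableSet A)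
    (h : ∀ s, MeasurableSet s → μ (f ⁻¹' s ∩ A) = μ (f ⁻¹' s) * μ A) (c : M) :
    IndepFun f (A.indicator fun _ => c) μ := by
  refine (Indep.indicator_indepFun c (m := MeasurableSpace.generateFrom {A})
    (MeasurableSpace.measurableSet_generateFrom rfl) ?_).symm
  refine IndepSets.indep (MeasurableSpace.generateFrom_le (by simpa using hA)) hf.comap_le
    (IsPiSystem.singleton A) (@MeasurableSpace.isPiSystem_measurableSet _ (.comap f inferInstance))
    rfl (@MeasurableSpace.generateFrom_measurableSet _ (.comap f inferInstance)).symm ?_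
  rw [IndepSets_iff]
  rintro _ _ rfl ⟨s, hs, rfl⟩
  rw [Set.inter_comm, mul_comm]
  exact h s hs

lemma IndepFun.comp_of_map {Ω α β γ : Type*} [MeasurableSpace Ω] [MeasurableSpace α]
    [MeasurableSpace β] [MeasurableSpace γ] {P : Measure Ω} {Z : Ω → α} (hZ : Measurable Z)
    {f : α → β} {g : α → γ} (hf : Measurable f) (hg : Measurable g)
    (hfg : IndepFun f g (P.map Z)) : IndepFun (f ∘ Z) (g ∘ Z) P := by
  rw [indepFun_iff_measure_inter_preimage_eq_mul] at hfg ⊢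
  intro s t hs ht
  have := hfg s t hs ht
  rwa [Measure.map_apply hZ ((hf hs).inter (hg ht)), Measure.map_apply hZ (hf hs),
    Measure.map_apply hZ (hg ht)] at this

lemma volume_setOf_add_mul_eq_zero (k : ℝ) : volume {p : ℝ × ℝ | p.1 + k * p.2 = 0} = 0 := by
  have h_ker : {p : ℝ × ℝ | p.1 + k * p.2 = 0} =
      LinearMap.ker (LinearMap.fst ℝ ℝ ℝ + k • LinearMap.snd ℝ ℝ ℝ) := by
    ext p
    simp
  rw [h_ker]
  refine Measure.addHaar_submodule _ _ fun h_top => ?_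
  have : ((1 : ℝ), (0 : ℝ)) ∈ LinearMap.ker (LinearMap.fst ℝ ℝ ℝ + k • LinearMap.snd ℝ ℝ ℝ) :=
    h_top ▸ Submodule.mem_top
  simp at this

lemma indepFun_indicator_add_mul_nonneg {β : Type*} [MeasurableSpace β] (μ ν : Measure ℝ)
    [IsProbabilityMeasure μ] [IsProbabilityMeasure ν] (hμ : μ.map Neg.neg = μ)
    (hν : ν.map Neg.neg = ν) (hμ_ac : μ ≪ volume) (hν_ac : ν ≪ volume)
    {f : ℝ × ℝ → β} (hf : Measurable f) (hf_even : ∀ p, f (-p) = f p) (k : ℝ) :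
    IndepFun f ({p : ℝ × ℝ | 0 ≤ p.1 + k * p.2}.indicator fun _ => (1 : ℕ)) (μ.prod ν) := by
  have hh : Measurable fun p : ℝ × ℝ => p.1 + k * p.2 := by fun_prop
  have h_neg : MeasurePreserving (Neg.neg : ℝ × ℝ → ℝ × ℝ) (μ.prod ν) (μ.prod ν) :=
    MeasurePreserving.prod ⟨measurable_neg, hμ⟩ ⟨measurable_neg, hν⟩
  have h_line : μ.prod ν {p : ℝ × ℝ | p.1 + k * p.2 = 0} = 0 :=
    hμ_ac.prod hν_ac (volume_setOf_add_mul_eq_zero k)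
  have h_half : ∀ S, MeasurableSet S → Neg.neg ⁻¹' S = S →
      μ.prod ν (S ∩ {p | 0 ≤ p.1 + k * p.2}) = μ.prod ν S / 2 := fun S hS hS_neg =>
    measure_inter_setOf_nonneg_eq_half h_neg hh
      (fun p => by simp only [Prod.fst_neg, Prod.snd_neg]; ring) h_line hS hS_neg
  refine indepFun_indicator_of_measure_inter_eq_mul hf (measurableSet_le measurable_const hh)
    (fun s hs => ?_) 1
  have hs_neg : Neg.neg ⁻¹' (f ⁻¹' s) = f ⁻¹' s := by
    ext p
    simp [hf_even]
  rw [h_half _ (hf hs) hs_neg, ← Set.univ_inter {p : ℝ × ℝ | 0 ≤ p.1 + k * p.2},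
    h_half _ MeasurableSet.univ rfl, measure_univ, one_div, div_eq_mul_inv]

lemma map_neg_uniformIcc (δ : ℝ) : (uniformIcc δ).map Neg.neg = uniformIcc δ := by
  have h_Icc : (Neg.neg : ℝ → ℝ) ⁻¹' Set.Icc (-δ) δ = Set.Icc (-δ) δ := by
    ext x
    simp [and_comm]
  have h_restrict := ((Measure.measurePreserving_neg (volume : Measure ℝ)).restrict_preimage
    (measurableSet_Icc (a := -δ) (b := δ))).map_eq
  rw [h_Icc] at h_restrict
  rw [uniformIcc, Measure.map_smul, h_restrict]

lemma uniformIcc_absolutelyContinuous (δ : ℝ) : uniformIcc δ ≪ volume :=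
  (Measure.absolutelyContinuous_of_le Measure.restrict_le_self).smul_left _

theorem stmt_0_general {Ω : Type*} [MeasurableSpace Ω] (P : Measure Ω) [IsProbabilityMeasure P]
    (δ : ℝ) (k : ℝ)
    (X Y : Ω → ℝ) (hX : Measurable X) (hY : Measurable Y)
    (hindep : IndepFun X Y P)
    (hXlaw : P.map X = uniformIcc δ) (hYlaw : P.map Y = uniformIcc δ)
    (C : Ω → ℕ) (hC : C = fun ω => if 0 ≤ X ω + k * Y ω then 1 else 0) :
    klDiv (P.map (fun ω => ((X ω) ^ 2, C ω)))
        ((P.map (fun ω => (X ω) ^ 2)).prod (P.map C)) = 0 ∧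
      P.map (fun ω => ((X ω) ^ 2, C ω))
        = (P.map (fun ω => (X ω) ^ 2)).prod (P.map C) := by
  have : IsProbabilityMeasure (uniformIcc δ) :=
    hXlaw ▸ Measure.isProbabilityMeasure_map hX.aemeasurable
  have h_law : P.map (fun ω => (X ω, Y ω)) = (uniformIcc δ).prod (uniformIcc δ) := by
    have h := (indepFun_iff_map_prod_eq_prod_map_map hX.aemeasurable hY.aemeasurable).mp hindep
    rwa [hXlaw, hYlaw] at h
  have hA : MeasurableSet {p : ℝ × ℝ | 0 ≤ p.1 + k * p.2} :=
    measurableSet_le measurable_const (by fun_prop)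
  have hC_indicator :
      C = {p : ℝ × ℝ | 0 ≤ p.1 + k * p.2}.indicator (fun _ => 1) ∘ fun ω => (X ω, Y ω) := by
    subst hC
    ext ω
    simp [Set.indicator]
  have h_indep : IndepFun (fun ω => X ω ^ 2) C P := by
    rw [hC_indicator]
    refine IndepFun.comp_of_map (f := fun p : ℝ × ℝ => p.1 ^ 2) (hX.prodMk hY) (by fun_prop)
      (measurable_const.indicator hA) ?_
    rw [h_law]
    exact indepFun_indicator_add_mul_nonneg _ _ (map_neg_uniformIcc δ) (map_neg_uniformIcc δ)
      (uniformIcc_absolutelyContinuous δ) (uniformIcc_absolutelyContinuous δ) (by fun_prop)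
      (fun p => by simp) k
  have hC_meas : Measurable C := hC_indicator ▸ (measurable_const.indicator hA).comp (hX.prodMk hY)
  have h_map := (indepFun_iff_map_prod_eq_prod_map_map (by fun_prop)
    hC_meas.aemeasurable).mp h_indep
  refine ⟨?_, h_map⟩
  rw [← h_map]
  exact klDiv_self _

theorem stmt_0 {Ω : Type*} [MeasurableSpace Ω] (P : Measure Ω) [IsProbabilityMeasure P]
    (δ : ℝ) (hδ : 0 < δ) (k : ℝ) (hk : k ∈ Set.Icc (0 : ℝ) 1)
    (X Y : Ω → ℝ) (hX : Measurable X) (hY : Measurable Y)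
    (hindep : IndepFun X Y P)
    (hXlaw : P.map X = uniformIcc δ) (hYlaw : P.map Y = uniformIcc δ)
    (C : Ω → ℕ) (hC : C = fun ω => if 0 ≤ X ω + k * Y ω then 1 else 0) :
    klDiv (P.map (fun ω => ((X ω) ^ 2, C ω)))
        ((P.map (fun ω => (X ω) ^ 2)).prod (P.map C)) = 0 ∧
      P.map (fun ω => ((X ω) ^ 2, C ω))
        = (P.map (fun ω => (X ω) ^ 2)).prod (P.map C) :=
  stmt_0_general P δ k X Y hX hY hindep hXlaw hYlaw C hC
end

section
/- Let δ > 0 and let X, Y be independent random variables, each uniformly distributed on [−δ, δ]. Then MI(X, X − Y) = 1/2, i.e., the KL divergence of the joint law of (X, X − Y) from the product of the law of X and the law of X − Y equals 1/2. -/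
open MeasureTheory ProbabilityTheory Real
open scoped Classical

/-!
Write `Z = X - Y`. The pair `(X, Z)` is the image of the uniform law on `[-δ, δ]²` under the
shear `(x, y) ↦ (x, x - y)`, so it has the constant density `(2δ)⁻²` on its support, and `Z` has
the triangular density `(2δ - |z|)⁺ / (2δ)²`. The likelihood ratio of the joint law against the
product of the marginals is therefore `2δ / (2δ - |z|)`, a function of `z` alone, and the
divergence is `(2δ)⁻² ∫ (2δ - |z|)⁺ log (2δ / (2δ - |z|)) dz = 2 (2δ)⁻² ∫₀^{2δ} t log (2δ / t) dt`,
which is `1/2` because `∫₀^r t log (r / t) dt = r² / 4`.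
-/

open Set
open scoped ENNReal

namespace MeasureTheory

variable {α β : Type*} [MeasurableSpace α] [MeasurableSpace β]

theorem MeasurePreserving.map_withDensity {μ : Measure α} {ν : Measure β} {e : α ≃ᵐ β}
    (he : MeasurePreserving e μ ν) (f : α → ℝ≥0∞) :
    (μ.withDensity f).map e = ν.withDensity (f ∘ e.symm) := by
  ext s hs
  rw [e.map_apply, withDensity_apply _ (e.measurable hs), withDensity_apply _ hs,
    ← he.setLIntegral_comp_preimage_emb e.measurableEmbedding]
  simp

theorem Measure.map_snd_prod_withDensity {μ : Measure α} {ν : Measure β} [SFinite μ]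
    [SFinite ν] {f : α × β → ℝ≥0∞} (hf : Measurable f) :
    ((μ.prod ν).withDensity f).map Prod.snd = ν.withDensity fun y => ∫⁻ x, f (x, y) ∂μ := by
  ext s hs
  rw [Measure.map_apply measurable_snd hs, withDensity_apply _ (measurable_snd hs),
    withDensity_apply _ hs, ← univ_prod, ← Measure.prod_restrict, Measure.restrict_univ,
    lintegral_prod_symm _ hf.aemeasurable]

theorem withDensity_eq_withDensity_withDensity_div {ν : Measure α} {f g : α → ℝ≥0∞}
    (hf : Measurable f) (hg : Measurable g) (hfg : ∀ᵐ x ∂ν, g x = 0 → f x = 0)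
    (hg_top : ∀ᵐ x ∂ν, g x ≠ ∞) :
    ν.withDensity f = (ν.withDensity g).withDensity fun x => f x / g x := by
  change _ = (ν.withDensity g).withDensity (f / g)
  rw [← withDensity_mul _ hg (hf.div hg)]
  refine withDensity_congr_ae ?_
  filter_upwards [hfg, hg_top] with x hfgx hgx
  by_cases hgx0 : g x = 0
  · simp [hgx0, hfgx hgx0]
  · exact (ENNReal.mul_div_cancel hgx0 hgx).symm

theorem llr_withDensity_ae_eq {ν : Measure α} [SigmaFinite ν] {ρ : α → ℝ≥0∞}
    (hρ : Measurable ρ) :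
    llr (ν.withDensity ρ) ν =ᵐ[ν.withDensity ρ] fun x => log (ρ x).toReal := by
  filter_upwards [(Measure.rnDeriv_withDensity ν hρ).filter_mono
    (withDensity_absolutelyContinuous ν ρ).ae_le] with x hx
  rw [llr, hx]

theorem klDiv_withDensity_withDensity {ν : Measure α} [SigmaFinite ν] {f g : α → ℝ≥0∞}
    (hf : Measurable f) (hg : Measurable g) (hfg : ∀ᵐ x ∂ν, g x = 0 → f x = 0)
    (hg_top : ∀ᵐ x ∂ν, g x ≠ ∞) {ℓ : α → ℝ}
    (hℓ : ∀ᵐ x ∂ν.withDensity f, log (f x / g x).toReal = ℓ x)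
    (hint : Integrable ℓ (ν.withDensity f)) :
    klDiv (ν.withDensity f) (ν.withDensity g) = ∫ x, ℓ x ∂ν.withDensity f := by
  have : SigmaFinite (ν.withDensity g) := SigmaFinite.withDensity_of_ne_top hg_top
  have hdiv := withDensity_eq_withDensity_withDensity_div hf hg hfg hg_top
  have hllr : llr (ν.withDensity f) (ν.withDensity g) =ᵐ[ν.withDensity f] ℓ := by
    rw [hdiv] at hℓ ⊢
    exact (llr_withDensity_ae_eq (hf.div hg)).trans hℓ
  have hac : ν.withDensity f ≪ ν.withDensity g := hdiv ▸ withDensity_absolutelyContinuous _ _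
  rw [klDiv, if_pos ⟨hac, (integrable_congr hllr).2 hint⟩, integral_congr_ae hllr]

end MeasureTheory

theorem integral_mul_log_sub_log_from_zero {r : ℝ} (hr : 0 ≤ r) :
    ∫ t in (0 : ℝ)..r, t * (log r - log t) = r ^ 2 / 4 := by
  have hcont : Continuous fun t : ℝ => t * (log r - log t) := by
    simp_rw [mul_sub]
    exact (continuous_id.mul continuous_const).sub continuous_mul_log
  have hderiv : ∀ t ∈ Ioo 0 r, HasDerivAt
      (fun t => t ^ 2 / 2 * log r - t * (t * log t) / 2 + t ^ 2 / 4) (t * (log r - log t)) t := by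
    intro t ht
    have h := (((hasDerivAt_pow 2 t).div_const 2).mul_const (log r)).sub
      (((hasDerivAt_id t).mul ((hasDerivAt_id t).mul (hasDerivAt_log ht.1.ne'))).div_const 2)
      |>.add ((hasDerivAt_pow 2 t).div_const 4)
    refine h.congr_deriv ?_
    simp only [id, Nat.cast_ofNat, Pi.mul_apply]
    field_simp [ht.1.ne']
    ring
  have hantider : Continuous fun t : ℝ => t ^ 2 / 2 * log r - t * (t * log t) / 2 + t ^ 2 / 4 :=
    ((continuous_pow 2).div_const 2 |>.mul continuous_const).sub
      ((continuous_id.mul continuous_mul_log).div_const 2) |>.add ((continuous_pow 2).div_const 4)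
  rw [intervalIntegral.integral_eq_sub_of_hasDerivAt_of_le hr hantider.continuousOn hderiv
    (hcont.intervalIntegrable 0 r)]
  ring

theorem continuous_max_sub_abs_mul_log_sub_log (r : ℝ) :
    Continuous fun z : ℝ => max (r - |z|) 0 * (log r - log (r - |z|)) := by
  have hmax : Continuous fun z : ℝ => max (r - |z|) 0 := by fun_prop
  convert (hmax.mul (continuous_const (y := log r))).sub (continuous_mul_log.comp hmax)
    using 2 with z
  rcases le_total (r - |z|) 0 with h | h
  · simp [max_eq_right h]
  · simp [max_eq_left h, mul_sub]

theorem integrable_max_sub_abs_mul_log_sub_log (r : ℝ) :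
    Integrable fun z : ℝ => max (r - |z|) 0 * (log r - log (r - |z|)) := by
  refine (continuous_max_sub_abs_mul_log_sub_log r).integrable_of_hasCompactSupport ?_
  refine HasCompactSupport.intro (isCompact_Icc (a := -r) (b := r)) fun z hz => ?_
  have : r - |z| ≤ 0 := by
    rw [mem_Icc, ← abs_le] at hz
    linarith
  simp [max_eq_right this]

theorem integral_max_sub_abs_mul_log_sub_log {r : ℝ} (hr : 0 ≤ r) :
    ∫ z, max (r - |z|) 0 * (log r - log (r - |z|)) = r ^ 2 / 2 := by
  have hvanish : ∀ t ∈ Ioi (0 : ℝ) \ Ioc 0 r, max (r - t) 0 * (log r - log (r - t)) = 0 := by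
    rintro t ⟨ht0, ht⟩
    have : r - t ≤ 0 := sub_nonpos.2 (not_le.1 fun h => ht ⟨ht0, h⟩).le
    simp [max_eq_right this]
  rw [integral_comp_abs (f := fun t => max (r - t) 0 * (log r - log (r - t))),
    setIntegral_eq_of_subset_of_forall_sdiff_eq_zero measurableSet_Ioi Ioc_subset_Ioi_self
      hvanish,
    ← intervalIntegral.integral_of_le hr]
  have htent : ∫ t in (0 : ℝ)..r, max (r - t) 0 * (log r - log (r - t))
      = ∫ t in (0 : ℝ)..r, (r - t) * (log r - log (r - t)) := by
    refine intervalIntegral.integral_congr fun t ht => ?_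
    rw [uIcc_of_le hr] at ht
    simp only [max_eq_left (sub_nonneg.2 ht.2)]
  rw [htent, intervalIntegral.integral_comp_sub_left (fun u => u * (log r - log u)), sub_self,
    sub_zero, integral_mul_log_sub_log_from_zero hr]
  ring

def diffShear : ℝ × ℝ ≃ᵐ ℝ × ℝ :=
  MeasurableEquiv.ofInvolutive (fun p => (p.1, p.1 - p.2)) (fun p => by simp) (by fun_prop)

theorem measurePreserving_diffShear :
    MeasurePreserving diffShear (volume.prod volume) (volume.prod volume) := by
  have : ⇑diffShear = Prod.map id Neg.neg ∘ fun p : ℝ × ℝ => (p.1, p.2 - p.1) := by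
    funext p
    simp only [Function.comp_apply, Prod.map_apply, id, neg_sub]
    rfl
  rw [this]
  exact ((MeasurePreserving.id volume).prod (Measure.measurePreserving_neg volume)).comp
    (measurePreserving_prod_sub volume volume)

namespace uniformIcc

noncomputable def density (δ : ℝ) : ℝ → ℝ≥0∞ :=
  (Icc (-δ) δ).indicator fun _ => (ENNReal.ofReal (2 * δ))⁻¹

noncomputable def diffDensity (δ z : ℝ) : ℝ≥0∞ :=
  ENNReal.ofReal ((2 * δ - |z|) / (2 * δ) ^ 2)

noncomputable def jointDensity (δ : ℝ) (p : ℝ × ℝ) : ℝ≥0∞ :=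
  density δ p.1 * density δ (p.1 - p.2)

variable {δ : ℝ}

@[fun_prop]
theorem measurable_density : Measurable (density δ) :=
  measurable_const.indicator measurableSet_Icc

@[fun_prop]
theorem measurable_diffDensity : Measurable (diffDensity δ) := by
  unfold diffDensity; fun_prop

theorem measurable_jointDensity : Measurable (jointDensity δ) := by
  unfold jointDensity; fun_prop

theorem eq_withDensity : uniformIcc δ = volume.withDensity (density δ) := by
  rw [uniformIcc, density, withDensity_indicator measurableSet_Icc, withDensity_const]

theorem map_diffShear_prod :
    ((uniformIcc δ).prod (uniformIcc δ)).map diffShear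
      = (volume.prod volume).withDensity (jointDensity δ) := by
  rw [eq_withDensity, prod_withDensity measurable_density measurable_density,
    measurePreserving_diffShear.map_withDensity]
  rfl

theorem jointDensity_eq_indicator (x z : ℝ) :
    jointDensity δ (x, z) = (Icc (-δ) δ ∩ Icc (z - δ) (z + δ)).indicator
      (fun _ => (ENNReal.ofReal (2 * δ))⁻¹ * (ENNReal.ofReal (2 * δ))⁻¹) x := by
  have hmem : x - z ∈ Icc (-δ) δ ↔ x ∈ Icc (z - δ) (z + δ) := by
    simp only [mem_Icc]
    constructor <;> rintro ⟨h₁, h₂⟩ <;> constructor <;> linarith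
  rw [inter_indicator_mul]
  simp only [jointDensity, density, indicator_apply, hmem]

theorem lintegral_jointDensity (hδ : 0 < δ) (z : ℝ) :
    ∫⁻ x, jointDensity δ (x, z) = diffDensity δ z := by
  have hlength : min δ (z + δ) - max (-δ) (z - δ) = 2 * δ - |z| := by
    rcases le_total 0 z with hz | hz
    · rw [min_eq_left (by linarith), max_eq_right (by linarith), abs_of_nonneg hz]; ring
    · rw [min_eq_right (by linarith), max_eq_left (by linarith), abs_of_nonpos hz]; ring
  simp_rw [jointDensity_eq_indicator]
  rw [lintegral_indicator_const (measurableSet_Icc.inter measurableSet_Icc), Icc_inter_Icc,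
    Real.volume_Icc, hlength, diffDensity, ← ENNReal.ofReal_inv_of_pos (by positivity),
    ← ENNReal.ofReal_mul (by positivity), ← ENNReal.ofReal_mul (by positivity)]
  congr 1
  field_simp

theorem map_snd_jointDensity (hδ : 0 < δ) :
    ((volume.prod volume).withDensity (jointDensity δ)).map Prod.snd
      = volume.withDensity (diffDensity δ) := by
  rw [Measure.map_snd_prod_withDensity measurable_jointDensity]
  simp_rw [lintegral_jointDensity hδ]

theorem density_of_mem {x : ℝ} (hx : x ∈ Icc (-δ) δ) :
    density δ x = (ENNReal.ofReal (2 * δ))⁻¹ :=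
  indicator_of_mem hx _

theorem density_ne_top (hδ : 0 < δ) (x : ℝ) : density δ x ≠ ∞ := by
  by_cases hx : x ∈ Icc (-δ) δ
  · simp [density_of_mem hx, hδ]
  · simp [density, hx]

theorem ae_mem_Icc_of_jointDensity_ne_zero (hδ : 0 < δ) :
    ∀ᵐ p ∂(volume.prod volume : Measure (ℝ × ℝ)), jointDensity δ p ≠ 0 →
      p.1 ∈ Icc (-δ) δ ∧ p.1 - p.2 ∈ Icc (-δ) δ ∧ |p.2| < 2 * δ := by
  have hnull : ∀ᵐ z : ℝ, |z| ≠ 2 * δ := by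
    filter_upwards [(toFinite {2 * δ, -(2 * δ)}).countable.ae_notMem volume] with z hz habs
    rcases (abs_eq (by positivity)).1 habs with h | h <;> simp [h] at hz
  filter_upwards [Measure.quasiMeasurePreserving_snd.ae hnull] with p hp hne
  have h₁ : p.1 ∈ Icc (-δ) δ := by
    by_contra h
    simp [jointDensity, density, h] at hne
  have h₂ : p.1 - p.2 ∈ Icc (-δ) δ := by
    by_contra h
    simp [jointDensity, density, h] at hne
  refine ⟨h₁, h₂, lt_of_le_of_ne ?_ hp⟩
  rw [abs_le]
  constructor <;> linarith [h₁.1, h₁.2, h₂.1, h₂.2]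

theorem log_jointDensity_div (hδ : 0 < δ) {p : ℝ × ℝ} (h₁ : p.1 ∈ Icc (-δ) δ)
    (h₂ : p.1 - p.2 ∈ Icc (-δ) δ) (h₃ : |p.2| < 2 * δ) :
    log (jointDensity δ p / (density δ p.1 * diffDensity δ p.2)).toReal
      = log (2 * δ) - log (2 * δ - |p.2|) := by
  have hpos : 0 < 2 * δ - |p.2| := by linarith
  rw [jointDensity, density_of_mem h₁, density_of_mem h₂, diffDensity, ENNReal.toReal_div,
    ENNReal.toReal_mul, ENNReal.toReal_mul, ENNReal.toReal_inv,
    ENNReal.toReal_ofReal (by positivity), ENNReal.toReal_ofReal (by positivity),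
    ← log_div (by positivity) hpos.ne']
  congr 1
  field_simp

theorem toReal_diffDensity_mul (z a : ℝ) :
    (diffDensity δ z).toReal * a = max (2 * δ - |z|) 0 * a / (2 * δ) ^ 2 := by
  rw [diffDensity, ENNReal.toReal_ofReal']
  rcases le_total (2 * δ - |z|) 0 with h | h
  · rw [max_eq_right h, max_eq_right (div_nonpos_of_nonpos_of_nonneg h (sq_nonneg _))]
    simp
  · rw [max_eq_left h, max_eq_left (by positivity)]
    ring

theorem integrable_diffDensity_log :
    Integrable (fun z => log (2 * δ) - log (2 * δ - |z|))
      (volume.withDensity (diffDensity δ)) := by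
  rw [integrable_withDensity_iff_integrable_smul' measurable_diffDensity
    (ae_of_all _ fun _ => ENNReal.ofReal_lt_top)]
  simp_rw [smul_eq_mul, toReal_diffDensity_mul]
  exact (integrable_max_sub_abs_mul_log_sub_log (2 * δ)).div_const _

theorem integral_diffDensity_log (hδ : 0 < δ) :
    ∫ z, log (2 * δ) - log (2 * δ - |z|) ∂volume.withDensity (diffDensity δ) = 1 / 2 := by
  rw [integral_withDensity_eq_integral_toReal_smul measurable_diffDensity
    (ae_of_all _ fun _ => ENNReal.ofReal_lt_top)]
  simp_rw [smul_eq_mul, toReal_diffDensity_mul]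
  rw [integral_div, integral_max_sub_abs_mul_log_sub_log (by positivity)]
  field_simp

theorem klDiv_jointDensity (hδ : 0 < δ) :
    klDiv ((volume.prod volume).withDensity (jointDensity δ))
      ((volume.prod volume).withDensity fun p => density δ p.1 * diffDensity δ p.2)
      = ((1 / 2 : ℝ) : EReal) := by
  have hsupp := ae_mem_Icc_of_jointDensity_ne_zero hδ
  have hsnd := map_snd_jointDensity hδ
  have hmeas : AEStronglyMeasurable (fun z : ℝ => log (2 * δ) - log (2 * δ - |z|))
      (((volume.prod volume).withDensity (jointDensity δ)).map Prod.snd) :=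
    Measurable.aestronglyMeasurable (by fun_prop)
  have hdom : ∀ᵐ p ∂(volume.prod volume : Measure (ℝ × ℝ)),
      density δ p.1 * diffDensity δ p.2 = 0 → jointDensity δ p = 0 := by
    filter_upwards [hsupp] with p hp hzero
    by_contra hne
    obtain ⟨h₁, -, h₃⟩ := hp hne
    have : 0 < (2 * δ - |p.2|) / (2 * δ) ^ 2 := div_pos (by linarith) (by positivity)
    rw [density_of_mem h₁, diffDensity, mul_eq_zero, ENNReal.inv_eq_zero,
      ENNReal.ofReal_eq_zero] at hzero
    exact hzero.elim ENNReal.ofReal_ne_top (not_le.2 this)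
  have hllr : ∀ᵐ p ∂(volume.prod volume).withDensity (jointDensity δ),
      log (jointDensity δ p / (density δ p.1 * diffDensity δ p.2)).toReal
        = log (2 * δ) - log (2 * δ - |p.2|) := by
    rw [ae_withDensity_iff measurable_jointDensity]
    filter_upwards [hsupp] with p hp hne
    obtain ⟨h₁, h₂, h₃⟩ := hp hne
    exact log_jointDensity_div hδ h₁ h₂ h₃
  have hint := (integrable_map_measure hmeas measurable_snd.aemeasurable).1
    (hsnd ▸ integrable_diffDensity_log)
  rw [klDiv_withDensity_withDensity measurable_jointDensity (by fun_prop) hdom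
    (ae_of_all _ fun p => ENNReal.mul_ne_top (density_ne_top hδ _) ENNReal.ofReal_ne_top) hllr
    hint, ← integral_diffDensity_log hδ, ← hsnd, integral_map measurable_snd.aemeasurable hmeas]

end uniformIcc

theorem stmt_8 {Ω : Type*} [MeasurableSpace Ω] (P : Measure Ω) [IsProbabilityMeasure P]
    (δ : ℝ) (hδ : 0 < δ)
    (X Y : Ω → ℝ) (hX : Measurable X) (hY : Measurable Y)
    (hindep : IndepFun X Y P)
    (hXlaw : P.map X = uniformIcc δ) (hYlaw : P.map Y = uniformIcc δ) :
    klDiv (P.map (fun ω => (X ω, X ω - Y ω)))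
        ((P.map X).prod (P.map (fun ω => X ω - Y ω))) = ((1 / 2 : ℝ) : EReal) := by
  have hpair : P.map (fun ω => (X ω, Y ω)) = (uniformIcc δ).prod (uniformIcc δ) := by
    rw [hindep.map_prod_eq_prod_map_map hX.aemeasurable hY.aemeasurable, hXlaw, hYlaw]
  have hjoint : P.map (fun ω => (X ω, X ω - Y ω))
      = (volume.prod volume).withDensity (uniformIcc.jointDensity δ) := by
    rw [← uniformIcc.map_diffShear_prod, ← hpair,
      Measure.map_map diffShear.measurable (hX.prodMk hY)]
    rfl
  have hdiff : P.map (fun ω => X ω - Y ω) = volume.withDensity (uniformIcc.diffDensity δ) := by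
    rw [← uniformIcc.map_snd_jointDensity hδ, ← hjoint,
      Measure.map_map measurable_snd (f := fun ω => (X ω, X ω - Y ω)) (by fun_prop)]
    rfl
  rw [hjoint, hdiff, hXlaw, uniformIcc.eq_withDensity,
    prod_withDensity uniformIcc.measurable_density uniformIcc.measurable_diffDensity]
  exact uniformIcc.klDiv_jointDensity hδ
end

section
/- Let X, Y be independent random variables, each uniformly distributed on [−1/2, 1/2], let k ∈ [0,1], and define C_k = 1 if X + kY ≥ 0 and C_k = 0 otherwise. Then MI(C_k, X) = log 2 − k/2, i.e., the KL divergence of the joint law of (X, C_k) from the product of the law of X and the law of C_k equals log 2 − k/2. -/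
open MeasureTheory ProbabilityTheory Real
open scoped Classical

/-!
Given `X = x`, the label `C` is a Bernoulli variable with parameter
`p x = P(x + k Y ≥ 0)`, which is `1/2 + x/k` clamped to `[0, 1]` (a step function when `k = 0`).
Since `p (-x) = 1 - p x`, the label is a fair coin, so the joint law of `(X, C)` has density
`2 P(C = c | X = x)` with respect to the product of the marginals and the divergence equals
`∫ (log 2 - h (p x)) dx`, where `h` is the binary entropy. Only the ramp `|x| < k/2` contributes
to `∫ h (p x) dx`, and substituting `t = p x` there gives `k ∫₀¹ h = k/2`.
-/

open scoped ENNReal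
open Set

lemma integrable_comp_of_forall_mem_Icc {α : Type*} [MeasurableSpace α] {μ : Measure α}
    [IsFiniteMeasure μ] {φ : ℝ → ℝ} (hφ : Continuous φ) {f : α → ℝ} (hf : Measurable f)
    {a b : ℝ} (hfab : ∀ x, f x ∈ Icc a b) : Integrable (fun x ↦ φ (f x)) μ := by
  obtain ⟨C, hC⟩ := isCompact_Icc.exists_bound_of_continuousOn hφ.continuousOn
  exact Integrable.of_bound (hφ.measurable.comp hf).aestronglyMeasurable C
    (ae_of_all _ fun x ↦ hC _ (hfab x))

section JointLaw

variable {α β γ : Type*} [MeasurableSpace α] [MeasurableSpace β] [MeasurableSpace γ]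
  [MeasurableSingletonClass γ] {μ : Measure α} {ν : Measure β} [SFinite ν] {g : α → β → γ}

lemma map_uncurry_prod_apply_singleton (hg : Measurable (Function.uncurry g)) (c : γ) :
    (μ.prod ν).map (Function.uncurry g) {c} = ∫⁻ x, ν {y | g x y = c} ∂μ := by
  rw [Measure.map_apply hg (measurableSet_singleton c),
    Measure.prod_apply (hg (measurableSet_singleton c))]
  rfl

lemma map_prod_graph_eq_withDensity [Countable γ] (hg : Measurable (Function.uncurry g))
    {ρ : Measure γ} [SFinite ρ] {F : α × γ → ℝ≥0∞} (hF : Measurable F)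
    (hFρ : ∀ x c, F (x, c) * ρ {c} = ν {y | g x y = c}) :
    (μ.prod ν).map (fun q ↦ (q.1, g q.1 q.2)) = (μ.prod ρ).withDensity F := by
  have hφ : Measurable fun q : α × β ↦ (q.1, g q.1 q.2) := measurable_fst.prodMk hg
  ext s hs
  rw [Measure.map_apply hφ hs, Measure.prod_apply (hφ hs), withDensity_apply _ hs,
    ← lintegral_indicator hs, lintegral_prod _ (hF.indicator hs).aemeasurable]
  refine lintegral_congr fun x ↦ ?_
  have hgx : Measurable (g x) := hg.comp measurable_prodMk_left
  calc ν (Prod.mk x ⁻¹' ((fun q : α × β ↦ (q.1, g q.1 q.2)) ⁻¹' s))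
      = ν.map (g x) (Prod.mk x ⁻¹' s) := (Measure.map_apply hgx (measurable_prodMk_left hs)).symm
    _ = ∑' c, (Prod.mk x ⁻¹' s).indicator (fun c ↦ ν.map (g x) {c}) c :=
        (Measure.tsum_indicator_apply_singleton _ _ (measurable_prodMk_left hs)).symm
    _ = ∫⁻ c, s.indicator F (x, c) ∂ρ := by
        rw [lintegral_countable']
        congr 1 with c
        by_cases hc : (x, c) ∈ s
        · simp [hc, hFρ, Measure.map_apply hgx (measurableSet_singleton c), Set.preimage]
        · simp [hc]

end JointLaw

section KullbackLeibler

variable {α : Type*} [MeasurableSpace α] {ν : Measure α} [SigmaFinite ν] {F : α → ℝ≥0∞}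

lemma klDiv_withDensity (hF : Measurable F) (hF_ne_top : ∀ᵐ a ∂ν, F a ≠ ∞)
    (hint : Integrable (fun a ↦ (F a).toReal * log (F a).toReal) ν) :
    klDiv (ν.withDensity F) ν = ((∫ a, (F a).toReal * log (F a).toReal ∂ν : ℝ) : EReal) := by
  have hac := withDensity_absolutelyContinuous ν F
  have : SigmaFinite (ν.withDensity F) := SigmaFinite.withDensity_of_ne_top hF_ne_top
  have hrn : (fun a ↦ ((ν.withDensity F).rnDeriv ν a).toReal
      * log ((ν.withDensity F).rnDeriv ν a).toReal)
      =ᵐ[ν] fun a ↦ (F a).toReal * log (F a).toReal := by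
    filter_upwards [Measure.rnDeriv_withDensity ν hF] with a ha
    rw [ha]
  rw [klDiv, if_pos ⟨hac, (integrable_rnDeriv_mul_log_iff hac).1 (hint.congr hrn.symm)⟩,
    ← integral_rnDeriv_mul_log hac, integral_congr_ae hrn]

end KullbackLeibler

noncomputable def fairCoin : Measure ℕ := (2 : ℝ≥0∞)⁻¹ • (Measure.dirac 0 + Measure.dirac 1)

instance : IsProbabilityMeasure fairCoin :=
  ⟨by simp [fairCoin, ENNReal.inv_two_add_inv_two]⟩

lemma fairCoin_singleton_zero : fairCoin {0} = 2⁻¹ := by simp [fairCoin]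

lemma fairCoin_singleton_one : fairCoin {1} = 2⁻¹ := by simp [fairCoin]

lemma fairCoin_singleton_of_two_le {c : ℕ} (hc : 2 ≤ c) : fairCoin {c} = 0 := by
  simp [fairCoin, show c ≠ 0 by omega, show c ≠ 1 by omega]

lemma integral_prod_fairCoin {α : Type*} [MeasurableSpace α] {μ : Measure α} [SFinite μ]
    {f : α × ℕ → ℝ} (hf : Integrable f (μ.prod fairCoin)) :
    ∫ q, f q ∂(μ.prod fairCoin) = ∫ x, (f (x, 0) + f (x, 1)) / 2 ∂μ := by
  have hsum : μ.prod fairCoin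
      = (2 : ℝ≥0∞)⁻¹ • (μ.map (fun x ↦ (x, 0)) + μ.map (fun x ↦ (x, 1))) := by
    rw [fairCoin, Measure.prod_smul_right, Measure.prod_add, Measure.prod_dirac,
      Measure.prod_dirac]
  rw [hsum] at hf ⊢
  have hf' := (integrable_smul_measure (by simp) (by simp)).1 hf
  have hf0 := hf'.left_of_add_measure
  have hf1 := hf'.right_of_add_measure
  have hf0' : Integrable (fun x ↦ f (x, 0)) μ := (integrable_map_measure hf0.1 (by fun_prop)).1 hf0
  have hf1' : Integrable (fun x ↦ f (x, 1)) μ := (integrable_map_measure hf1.1 (by fun_prop)).1 hf1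
  rw [integral_smul_measure, integral_add_measure hf0 hf1, integral_map (by fun_prop) hf0.1,
    integral_map (by fun_prop) hf1.1, integral_div, integral_add hf0' hf1']
  simp [div_eq_inv_mul]

lemma intervalIntegral_eq_of_add_comp_neg_eq_one {f : ℝ → ℝ} {a : ℝ}
    (hf : IntervalIntegrable f volume (-a) a) (h : ∀ x ≠ 0, f x + f (-x) = 1) :
    ∫ x in -a..a, f x = a := by
  have hneg : ∫ x in -a..a, f (-x) = ∫ x in -a..a, f x := by
    rw [intervalIntegral.integral_comp_neg, neg_neg]
  have hcompl : ∫ x in -a..a, f (-x) = ∫ x in -a..a, (1 - f x) := by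
    refine intervalIntegral.integral_congr_ae ?_
    filter_upwards [Measure.ae_ne volume 0] with x hx _
    linarith [h x hx]
  rw [intervalIntegral.integral_sub intervalIntegrable_const hf, intervalIntegral.integral_const,
    hneg] at hcompl
  simp only [sub_neg_eq_add, smul_eq_mul, mul_one] at hcompl
  linarith

lemma hasDerivAt_half_mul_mul_log_sub {t : ℝ} (ht : 0 < t) :
    HasDerivAt (fun s ↦ s / 2 * (s * log s) - s ^ 2 / 4) (t * log t) t := by
  refine ((((hasDerivAt_id' t).div_const 2).mul (hasDerivAt_mul_log ht.ne')).sub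
    ((hasDerivAt_pow 2 t).div_const 4)).congr_deriv ?_
  ring

lemma integral_binEntropy_zero_one : ∫ t in (0 : ℝ)..1, binEntropy t = 1 / 2 := by
  set ψ : ℝ → ℝ := fun s ↦ s / 2 * (s * log s) - s ^ 2 / 4 with hψ
  have hψ_cont : Continuous ψ :=
    ((continuous_id.div_const 2).mul continuous_mul_log).sub (by fun_prop)
  have hderiv : ∀ t ∈ Ioo (0 : ℝ) 1, HasDerivAt (fun t ↦ ψ (1 - t) - ψ t) (binEntropy t) t := by
    intro t ht
    have h1 := (hasDerivAt_half_mul_mul_log_sub (sub_pos.2 ht.2)).comp t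
      ((hasDerivAt_id' t).const_sub 1)
    refine (h1.sub (hasDerivAt_half_mul_mul_log_sub ht.1)).congr_deriv ?_
    rw [binEntropy_eq_negMulLog_add_negMulLog_one_sub, negMulLog, negMulLog]
    ring
  rw [intervalIntegral.integral_eq_sub_of_hasDerivAt_of_le zero_le_one (by fun_prop) hderiv
    (binEntropy_continuous.intervalIntegrable 0 1)]
  norm_num [hψ]

lemma log_two_sub_binEntropy (p : ℝ) :
    log 2 - binEntropy p = (2 * (1 - p) * log (2 * (1 - p)) + 2 * p * log (2 * p)) / 2 := by
  have h0 := negMulLog_mul 2 (1 - p)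
  have h1 := negMulLog_mul 2 p
  rw [binEntropy_eq_negMulLog_add_negMulLog_one_sub]
  simp only [negMulLog] at *
  linarith

notation "𝒰" => volume.restrict (Icc (-(1 / 2 : ℝ)) (1 / 2))

lemma uniformIcc_half : uniformIcc (1 / 2) = 𝒰 := by
  simp [uniformIcc]

instance : IsProbabilityMeasure 𝒰 :=
  ⟨by norm_num⟩

noncomputable def classLabel (k x y : ℝ) : ℕ := if 0 ≤ x + k * y then 1 else 0

lemma measurableSet_nonneg_add_mul (k : ℝ) : MeasurableSet {q : ℝ × ℝ | 0 ≤ q.1 + k * q.2} :=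
  measurableSet_le measurable_const (by fun_prop)

lemma measurable_classLabel (k : ℝ) : Measurable (Function.uncurry (classLabel k)) :=
  Measurable.ite (measurableSet_nonneg_add_mul k) measurable_const measurable_const

noncomputable def probClassOne (k x : ℝ) : ℝ := (𝒰 {y | 0 ≤ x + k * y}).toReal

lemma measurable_probClassOne (k : ℝ) : Measurable (probClassOne k) :=
  (measurable_measure_prodMk_left (measurableSet_nonneg_add_mul k)).ennreal_toReal

lemma probClassOne_mem_Icc (k x : ℝ) : probClassOne k x ∈ Icc 0 1 :=
  ⟨ENNReal.toReal_nonneg,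
    ENNReal.toReal_le_of_le_ofReal zero_le_one (ENNReal.ofReal_one ▸ prob_le_one)⟩

lemma measure_classLabel_eq_one (k x : ℝ) :
    𝒰 {y | classLabel k x y = 1} = ENNReal.ofReal (probClassOne k x) := by
  have hset : {y | classLabel k x y = 1} = {y | 0 ≤ x + k * y} := by
    ext y; by_cases h : 0 ≤ x + k * y <;> simp [classLabel, h]
  rw [hset, probClassOne, ENNReal.ofReal_toReal (measure_ne_top _ _)]

lemma measure_classLabel_eq_zero (k x : ℝ) :
    𝒰 {y | classLabel k x y = 0} = ENNReal.ofReal (1 - probClassOne k x) := by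
  have hset : {y | classLabel k x y = 0} = {y | 0 ≤ x + k * y}ᶜ := by
    ext y; by_cases h : 0 ≤ x + k * y <;> simp [classLabel, h, not_le.mp]
  rw [hset, measure_compl (measurableSet_le measurable_const (by fun_prop))
    (measure_ne_top _ _), measure_univ, probClassOne, ENNReal.ofReal_sub _ ENNReal.toReal_nonneg,
    ENNReal.ofReal_one, ENNReal.ofReal_toReal (measure_ne_top _ _)]

lemma measure_classLabel_eq_of_two_le (k x : ℝ) {c : ℕ} (hc : 2 ≤ c) :
    𝒰 {y | classLabel k x y = c} = 0 := by
  have hset : {y | classLabel k x y = c} = ∅ := by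
    ext y; by_cases h : 0 ≤ x + k * y <;> simp [classLabel, h] <;> omega
  rw [hset, measure_empty]

lemma probClassOne_zero (x : ℝ) : probClassOne 0 x = if 0 ≤ x then 1 else 0 := by
  by_cases hx : 0 ≤ x <;> norm_num [probClassOne, hx]

lemma probClassOne_of_pos {k : ℝ} (hk : 0 < k) (x : ℝ) :
    probClassOne k x = max 0 (min 1 (1 / 2 + x / k)) := by
  have hset : {y | 0 ≤ x + k * y} = Ici (-(x / k)) := by
    ext y
    rw [mem_ofPred_eq, mem_Ici, ← neg_div, div_le_iff₀' hk]
    constructor <;> intro h <;> linarith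
  rw [probClassOne, hset, Measure.restrict_apply measurableSet_Ici, ← Ici_inter_Iic, ← inter_assoc,
    Ici_inter_Ici, Ici_inter_Iic, Real.volume_Icc, ENNReal.toReal_ofReal', max_comm]
  grind

lemma probClassOne_add_neg {k : ℝ} (hk : 0 ≤ k) {x : ℝ} (hx : x ≠ 0) :
    probClassOne k x + probClassOne k (-x) = 1 := by
  rcases hk.eq_or_lt with rfl | hk
  · rcases hx.lt_or_gt with hx | hx <;> simp [probClassOne_zero, hx.le, hx.not_ge]
  · rw [probClassOne_of_pos hk, probClassOne_of_pos hk, neg_div]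
    grind

lemma integrable_probClassOne (k : ℝ) : Integrable (probClassOne k) 𝒰 :=
  integrable_comp_of_forall_mem_Icc continuous_id' (measurable_probClassOne k)
    (probClassOne_mem_Icc k)

lemma integral_probClassOne {k : ℝ} (hk : 0 ≤ k) : ∫ x, probClassOne k x ∂𝒰 = 1 / 2 := by
  rw [integral_Icc_eq_integral_Ioc, ← intervalIntegral.integral_of_le (by norm_num)]
  exact intervalIntegral_eq_of_add_comp_neg_eq_one
    ((intervalIntegrable_iff_integrableOn_Ioc_of_le (by norm_num)).2
      (IntegrableOn.mono_set (integrable_probClassOne k) Ioc_subset_Icc_self))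
    fun x hx ↦ probClassOne_add_neg hk hx

lemma integral_binEntropy_clamp {k : ℝ} (hk0 : 0 < k) (hk1 : k ≤ 1) :
    ∫ x in Icc (-(1 / 2)) (1 / 2), binEntropy (max 0 (min 1 (1 / 2 + x / k))) = k / 2 := by
  set b : ℝ → ℝ := fun t ↦ binEntropy (max 0 (min 1 t)) with hb
  have hb_out : ∀ t ∉ Ioo (0 : ℝ) 1, b t = 0 := by
    intro t ht
    rcases not_and_or.1 ht with ht | ht
    · simp [hb, max_eq_left (min_le_of_right_le (not_lt.1 ht))]
    · simp [hb, min_eq_left (not_lt.1 ht)]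
  have hb_in : EqOn b binEntropy (Icc 0 1) := fun t ht ↦ by
    simp [hb, min_eq_right ht.2, max_eq_right ht.1]
  calc ∫ x in Icc (-(1 / 2)) (1 / 2), b (1 / 2 + x / k)
      = ∫ x, b (1 / 2 + x / k) := by
        refine setIntegral_eq_integral_of_forall_compl_eq_zero fun x hx ↦ hb_out _ fun ht ↦ hx ?_
        rw [mem_Ioo, ← sub_lt_iff_lt_add', ← lt_sub_iff_add_lt', lt_div_iff₀ hk0,
          div_lt_iff₀ hk0] at ht
        constructor <;> nlinarith
    _ = k * ∫ t, b t := by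
        rw [Measure.integral_comp_div (fun t ↦ b (1 / 2 + t)) k, integral_add_left_eq_self,
          abs_of_pos hk0, smul_eq_mul]
    _ = k * ∫ t in Icc 0 1, b t := by
        rw [setIntegral_eq_integral_of_forall_compl_eq_zero fun t ht ↦
          hb_out t fun ht' ↦ ht (Ioo_subset_Icc_self ht')]
    _ = k * ∫ t in (0 : ℝ)..1, binEntropy t := by
        rw [intervalIntegral.integral_of_le zero_le_one, ← integral_Icc_eq_integral_Ioc,
          setIntegral_congr_fun measurableSet_Icc hb_in]
    _ = k / 2 := by rw [integral_binEntropy_zero_one]; ring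

lemma integral_binEntropy_probClassOne {k : ℝ} (hk : k ∈ Icc 0 1) :
    ∫ x, binEntropy (probClassOne k x) ∂𝒰 = k / 2 := by
  rcases hk.1.eq_or_lt with rfl | hk0
  · simp [probClassOne_zero, apply_ite binEntropy]
  · simp_rw [probClassOne_of_pos hk0]
    exact integral_binEntropy_clamp hk0 hk.2

lemma law_classLabel {k : ℝ} (hk : 0 ≤ k) :
    (Measure.prod 𝒰 𝒰).map (Function.uncurry (classLabel k)) = fairCoin := by
  have hlintegral {f : ℝ → ℝ} (hf : Integrable f 𝒰) (hf_nonneg : ∀ x, 0 ≤ f x)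
      (hint : ∫ x, f x ∂𝒰 = 1 / 2) : ∫⁻ x, ENNReal.ofReal (f x) ∂𝒰 = 2⁻¹ := by
    rw [← ofReal_integral_eq_lintegral_ofReal hf (ae_of_all _ hf_nonneg), hint, one_div,
      ENNReal.ofReal_inv_of_pos two_pos, ENNReal.ofReal_ofNat]
  refine Measure.ext_of_singleton fun c ↦ ?_
  rw [map_uncurry_prod_apply_singleton (measurable_classLabel k)]
  rcases lt_trichotomy c 1 with hc | rfl | hc
  · obtain rfl : c = 0 := by omega
    simp_rw [measure_classLabel_eq_zero, fairCoin_singleton_zero]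
    refine hlintegral ((integrable_const 1).sub (integrable_probClassOne k))
      (fun x ↦ sub_nonneg.2 (probClassOne_mem_Icc k x).2) ?_
    rw [integral_sub (integrable_const 1) (integrable_probClassOne k), integral_probClassOne hk]
    norm_num
  · simp_rw [measure_classLabel_eq_one, fairCoin_singleton_one]
    exact hlintegral (integrable_probClassOne k) (fun x ↦ (probClassOne_mem_Icc k x).1)
      (integral_probClassOne hk)
  · simp_rw [measure_classLabel_eq_of_two_le _ _ hc, fairCoin_singleton_of_two_le hc,
      lintegral_zero]

noncomputable def classDensity (k : ℝ) (q : ℝ × ℕ) : ℝ≥0∞ := 2 * 𝒰 {y | classLabel k q.1 y = q.2}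

lemma measurable_classDensity (k : ℝ) : Measurable (classDensity k) := by
  have hs : MeasurableSet {p : (ℝ × ℕ) × ℝ | classLabel k p.1.1 p.2 = p.1.2} :=
    measurableSet_eq_fun ((measurable_classLabel k).comp (measurable_fst.fst.prodMk measurable_snd))
      measurable_fst.snd
  exact measurable_const.mul (measurable_measure_prodMk_left hs)

lemma classDensity_le_two (k : ℝ) (q : ℝ × ℕ) : classDensity k q ≤ 2 :=
  mul_le_of_le_one_right' prob_le_one

lemma classDensity_mul_fairCoin (k x : ℝ) (c : ℕ) :
    classDensity k (x, c) * fairCoin {c} = 𝒰 {y | classLabel k x y = c} := by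
  have h_half (a : ℝ≥0∞) : 2 * a * 2⁻¹ = a := by
    rw [mul_right_comm, ENNReal.mul_inv_cancel two_ne_zero ENNReal.ofNat_ne_top, one_mul]
  rcases lt_trichotomy c 1 with hc | rfl | hc
  · obtain rfl : c = 0 := by omega
    rw [fairCoin_singleton_zero]
    exact h_half _
  · rw [fairCoin_singleton_one]
    exact h_half _
  · rw [fairCoin_singleton_of_two_le hc, mul_zero, measure_classLabel_eq_of_two_le _ _ hc]

lemma classDensity_toReal_zero (k x : ℝ) :
    (classDensity k (x, 0)).toReal = 2 * (1 - probClassOne k x) := by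
  rw [classDensity, measure_classLabel_eq_zero, ENNReal.toReal_mul,
    ENNReal.toReal_ofReal (sub_nonneg.2 (probClassOne_mem_Icc k x).2), ENNReal.toReal_ofNat]

lemma classDensity_toReal_one (k x : ℝ) :
    (classDensity k (x, 1)).toReal = 2 * probClassOne k x := by
  rw [classDensity, measure_classLabel_eq_one, ENNReal.toReal_mul,
    ENNReal.toReal_ofReal (probClassOne_mem_Icc k x).1, ENNReal.toReal_ofNat]

lemma joint_law_classLabel (k : ℝ) :
    (Measure.prod 𝒰 𝒰).map (fun q ↦ (q.1, classLabel k q.1 q.2))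
      = (Measure.prod 𝒰 fairCoin).withDensity (classDensity k) :=
  map_prod_graph_eq_withDensity (measurable_classLabel k) (measurable_classDensity k)
    (classDensity_mul_fairCoin k)

lemma integrable_classDensity_mul_log (k : ℝ) :
    Integrable (fun q ↦ (classDensity k q).toReal * log (classDensity k q).toReal)
      (Measure.prod 𝒰 fairCoin) :=
  integrable_comp_of_forall_mem_Icc continuous_mul_log (measurable_classDensity k).ennreal_toReal
    fun q ↦ ⟨ENNReal.toReal_nonneg, ENNReal.toReal_le_of_le_ofReal zero_le_two
      (ENNReal.ofReal_ofNat 2 ▸ classDensity_le_two k q)⟩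

lemma integral_classDensity_mul_log {k : ℝ} (hk : k ∈ Icc 0 1) :
    ∫ q, (classDensity k q).toReal * log (classDensity k q).toReal ∂(Measure.prod 𝒰 fairCoin)
      = log 2 - k / 2 := by
  have hint_binEntropy : Integrable (fun x ↦ binEntropy (probClassOne k x)) 𝒰 :=
    integrable_comp_of_forall_mem_Icc binEntropy_continuous (measurable_probClassOne k)
      (probClassOne_mem_Icc k)
  simp_rw [integral_prod_fairCoin (integrable_classDensity_mul_log k), classDensity_toReal_zero,
    classDensity_toReal_one, ← log_two_sub_binEntropy]
  rw [integral_sub (integrable_const _) hint_binEntropy, integral_const, probReal_univ,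
    integral_binEntropy_probClassOne hk, one_smul]

theorem stmt_11 {Ω : Type*} [MeasurableSpace Ω] (P : Measure Ω) [IsProbabilityMeasure P]
    (k : ℝ) (hk : k ∈ Set.Icc (0 : ℝ) 1)
    (X Y : Ω → ℝ) (hX : Measurable X) (hY : Measurable Y)
    (hindep : IndepFun X Y P)
    (hXlaw : P.map X = uniformIcc (1 / 2)) (hYlaw : P.map Y = uniformIcc (1 / 2))
    (C : Ω → ℕ) (hC : C = fun ω => if 0 ≤ X ω + k * Y ω then 1 else 0) :
    klDiv (P.map (fun ω => (X ω, C ω))) ((P.map X).prod (P.map C))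
      = ((Real.log 2 - k / 2 : ℝ) : EReal) := by
  have hXY : P.map (fun ω ↦ (X ω, Y ω)) = Measure.prod 𝒰 𝒰 := by
    rw [(indepFun_iff_map_prod_eq_prod_map_map hX.aemeasurable hY.aemeasurable).1 hindep,
      hXlaw, hYlaw, uniformIcc_half]
  have hlawC : P.map C = fairCoin := by
    rw [← law_classLabel hk.1, ← hXY, Measure.map_map (measurable_classLabel k) (hX.prodMk hY),
      hC]
    rfl
  have hlawXC : P.map (fun ω ↦ (X ω, C ω))
      = (Measure.prod 𝒰 fairCoin).withDensity (classDensity k) := by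
    rw [← joint_law_classLabel, ← hXY,
      Measure.map_map (g := fun q ↦ (q.1, classLabel k q.1 q.2))
        (measurable_fst.prodMk (measurable_classLabel k)) (hX.prodMk hY), hC]
    rfl
  rw [hlawXC, hXlaw, uniformIcc_half, hlawC,
    klDiv_withDensity (measurable_classDensity k)
      (ae_of_all _ fun q ↦ ne_top_of_le_ne_top ENNReal.ofNat_ne_top (classDensity_le_two k q))
      (integrable_classDensity_mul_log k),
    integral_classDensity_mul_log hk]
end

section
/- Let X, Y be independent standard normal random variables, let k ∈ [0,1], and define C_k = 1 if X + kY ≥ 0 and C_k = 0 otherwise. Then for every t ∈ ℝ, P(Y ≤ t and C_k = 1) = ∫_{−∞}^t φ(y)·Φ(k·y) dy, where φ and Φ denote the density and cumulative distribution function of the standard normal distribution; consequently the conditional density of Y given C_k = 1 is the skew-normal density y ↦ 2·φ(y)·Φ(k·y). -/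
open MeasureTheory ProbabilityTheory Real
open scoped Classical

/-!
Conditionally on `Y = y`, the event `X + kY ≥ 0` is `X ≥ -ky`, of probability `Φ(ky)` by
independence and the symmetry of `X`; so the pair `(Y, C_k = 1)` has the sub-probability density
`φ(y) Φ(ky)`. Its total mass is `1/2`, because `y ↦ -y` preserves `φ` and `Φ(ky) + Φ(-ky) = 1`,
and dividing by it gives the skew-normal density `2 φ(y) Φ(ky)`.
-/

open Set

section SymmetricLaw

variable {μ ν : Measure ℝ}

lemma measure_Ici_neg_of_map_neg (hμ : μ.map (fun x ↦ -x) = μ) (a : ℝ) :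
    μ (Ici (-a)) = μ (Iic a) := by
  conv_rhs => rw [← hμ]
  rw [Measure.map_apply measurable_neg measurableSet_Iic]
  congr 1
  ext x
  simp

lemma measure_Iic_add_measure_Iic_neg [IsProbabilityMeasure μ] [NullSingletonClass μ]
    (hμ : μ.map (fun x ↦ -x) = μ) (a : ℝ) : μ (Iic a) + μ (Iic (-a)) = 1 := by
  rw [← measure_Ici_neg_of_map_neg hμ (-a), neg_neg, ← measure_congr Ioi_ae_eq_Ici, ← compl_Iic,
    measure_add_measure_compl measurableSet_Iic, measure_univ]

-- The substitution `y ↦ -y` turns `μ (Iic (c * y))` into its complement.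
lemma lintegral_measure_Iic_const_mul_eq_half [IsProbabilityMeasure μ] [NullSingletonClass μ]
    [IsProbabilityMeasure ν] (hμ : μ.map (fun x ↦ -x) = μ) (hν : ν.map (fun x ↦ -x) = ν)
    (c : ℝ) : ∫⁻ y, μ (Iic (c * y)) ∂ν = 1 / 2 := by
  have hmono : Monotone fun a ↦ μ (Iic a) := fun _ _ hab ↦ measure_mono (Iic_subset_Iic.2 hab)
  have hf : Measurable fun y ↦ μ (Iic (c * y)) := hmono.measurable.comp (measurable_const_mul c)
  have hflip : ∫⁻ y, μ (Iic (c * -y)) ∂ν = ∫⁻ y, μ (Iic (c * y)) ∂ν := by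
    conv_rhs => rw [← hν]
    rw [lintegral_map hf measurable_neg]
  have hsum : ∫⁻ y, μ (Iic (c * y)) ∂ν + ∫⁻ y, μ (Iic (c * y)) ∂ν = 1 := by
    conv_lhs => enter [2]; rw [← hflip]
    rw [← lintegral_add_left hf]
    simp [mul_neg, measure_Iic_add_measure_Iic_neg hμ]
  rw [ENNReal.eq_div_iff two_ne_zero ENNReal.ofNat_ne_top, two_mul, hsum]

end SymmetricLaw

lemma measure_mem_and_nonneg_add_mul {Ω : Type*} [MeasurableSpace Ω] {P : Measure Ω}
    [IsFiniteMeasure P] {X Y : Ω → ℝ} (hX : Measurable X) (hY : Measurable Y)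
    (hindep : IndepFun X Y P) (k : ℝ) {s : Set ℝ} (hs : MeasurableSet s) :
    P {ω | Y ω ∈ s ∧ 0 ≤ X ω + k * Y ω} = ∫⁻ y in s, P.map X (Ici (-(k * y))) ∂P.map Y := by
  set S : Set (ℝ × ℝ) := {p | p.1 ∈ s ∧ 0 ≤ p.2 + k * p.1}
  have hS : MeasurableSet S :=
    (measurable_fst hs).inter
      (measurableSet_le measurable_const (measurable_snd.add (measurable_fst.const_mul k)))
  have hlaw := (indepFun_iff_map_prod_eq_prod_map_map hY.aemeasurable hX.aemeasurable).1
    hindep.symm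
  rw [show {ω | Y ω ∈ s ∧ 0 ≤ X ω + k * Y ω} = (fun ω ↦ (Y ω, X ω)) ⁻¹' S from rfl,
    ← Measure.map_apply (hY.prodMk hX) hS, hlaw, Measure.prod_apply hS,
    ← lintegral_indicator hs]
  congr 1
  ext y
  by_cases hy : y ∈ s
  · simp only [indicator_of_mem hy]
    congr 1
    ext x
    simp [S, hy, neg_le_iff_add_nonneg]
  · simp [S, hy]

lemma measure_nonneg_add_mul_eq_half {Ω : Type*} [MeasurableSpace Ω] {P : Measure Ω}
    [IsFiniteMeasure P] {X Y : Ω → ℝ} (hX : Measurable X) (hY : Measurable Y)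
    (hindep : IndepFun X Y P) {μ ν : Measure ℝ} [IsProbabilityMeasure μ] [NullSingletonClass μ]
    [IsProbabilityMeasure ν] (hXlaw : P.map X = μ) (hYlaw : P.map Y = ν)
    (hμ : μ.map (fun x ↦ -x) = μ) (hν : ν.map (fun x ↦ -x) = ν) (k : ℝ) :
    P {ω | 0 ≤ X ω + k * Y ω} = 1 / 2 := by
  simpa [hXlaw, hYlaw, measure_Ici_neg_of_map_neg hμ,
    lintegral_measure_Iic_const_mul_eq_half hμ hν] using
    measure_mem_and_nonneg_add_mul hX hY hindep k MeasurableSet.univ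

lemma map_cond_eq_withDensity {Ω β : Type*} [MeasurableSpace Ω] [MeasurableSpace β]
    {P : Measure Ω} {Y : Ω → β} (hY : Measurable Y) {A : Set Ω} (hA : MeasurableSet A)
    {ν : Measure β} {f : β → ENNReal} (hf : Measurable f)
    (hjoint : ∀ s, MeasurableSet s → P (Y ⁻¹' s ∩ A) = ∫⁻ y in s, f y ∂ν) :
    P[|A].map Y = ν.withDensity fun y ↦ (P A)⁻¹ * f y := by
  ext s hs
  rw [Measure.map_apply hY hs, cond_apply hA, inter_comm, hjoint s hs, withDensity_apply _ hs,
    lintegral_const_mul _ hf]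

lemma gaussianReal_zero_map_neg (v : NNReal) :
    (gaussianReal 0 v).map (fun x ↦ -x) = gaussianReal 0 v := by
  rw [gaussianReal_map_neg, neg_zero]

lemma integral_Iic_gaussianPDFReal (m : ℝ) {v : NNReal} (hv : v ≠ 0) (x : ℝ) :
    ∫ y in Iic x, gaussianPDFReal m v y = cdf (gaussianReal m v) x := by
  rw [cdf_eq_real, measureReal_def, gaussianReal_apply_eq_integral m hv,
    ENNReal.toReal_ofReal (setIntegral_nonneg measurableSet_Iic fun y _ ↦
      gaussianPDFReal_nonneg m v y)]

lemma setLIntegral_gaussianReal_eq_setLIntegral_mul (m : ℝ) {v : NNReal} (hv : v ≠ 0)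
    {g : ℝ → ENNReal} (hg : Measurable g) {s : Set ℝ} (hs : MeasurableSet s) :
    ∫⁻ y in s, g y ∂gaussianReal m v = ∫⁻ y in s, ENNReal.ofReal (gaussianPDFReal m v y) * g y := by
  rw [gaussianReal_of_var_ne_zero m hv, setLIntegral_withDensity_eq_setLIntegral_mul _
    (measurable_gaussianPDF m v) hg hs]
  rfl

lemma measurable_gaussianPDFReal_mul_cdf (k : ℝ) :
    Measurable fun y ↦ gaussianPDFReal 0 1 y * cdf (gaussianReal 0 1) (k * y) :=
  (measurable_gaussianPDFReal 0 1).mul ((cdf _).mono.measurable.comp (measurable_const_mul k))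

lemma measure_mem_and_nonneg_add_mul_gaussian {Ω : Type*} [MeasurableSpace Ω] {P : Measure Ω}
    [IsFiniteMeasure P] {X Y : Ω → ℝ} (hX : Measurable X) (hY : Measurable Y)
    (hindep : IndepFun X Y P) (hXlaw : P.map X = gaussianReal 0 1)
    (hYlaw : P.map Y = gaussianReal 0 1) (k : ℝ) {s : Set ℝ} (hs : MeasurableSet s) :
    P {ω | Y ω ∈ s ∧ 0 ≤ X ω + k * Y ω} = ∫⁻ y in s,
      ENNReal.ofReal (gaussianPDFReal 0 1 y * cdf (gaussianReal 0 1) (k * y)) := by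
  have hcdf : Measurable fun y ↦ gaussianReal 0 1 (Iic (k * y)) := by
    simp_rw [← ofReal_cdf]
    exact ((cdf _).mono.measurable.comp (measurable_const_mul k)).ennreal_ofReal
  rw [measure_mem_and_nonneg_add_mul hX hY hindep k hs, hXlaw, hYlaw]
  simp_rw [measure_Ici_neg_of_map_neg (gaussianReal_zero_map_neg 1)]
  rw [setLIntegral_gaussianReal_eq_setLIntegral_mul 0 one_ne_zero hcdf hs]
  simp_rw [← ofReal_cdf, ← ENNReal.ofReal_mul (gaussianPDFReal_nonneg 0 1 _)]

theorem stmt_16_general {Ω : Type*} [MeasurableSpace Ω] (P : Measure Ω) [IsProbabilityMeasure P]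
    (k : ℝ)
    (X Y : Ω → ℝ) (hX : Measurable X) (hY : Measurable Y)
    (hindep : IndepFun X Y P)
    (hXlaw : P.map X = gaussianReal 0 1) (hYlaw : P.map Y = gaussianReal 0 1)
    (C : Ω → ℕ) (hC : C = fun ω => if 0 ≤ X ω + k * Y ω then 1 else 0)
    (φ : ℝ → ℝ) (hφ : φ = fun y => (Real.sqrt (2 * Real.pi))⁻¹ * Real.exp (-(y ^ 2) / 2))
    (Φ : ℝ → ℝ) (hΦ : Φ = fun x => ∫ y in Set.Iic x, φ y) :
    (∀ t : ℝ, (P {ω | Y ω ≤ t ∧ C ω = 1}).toReal = ∫ y in Set.Iic t, φ y * Φ (k * y)) ∧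
      (ProbabilityTheory.cond P {ω | C ω = 1}).map Y
        = volume.withDensity (fun y => ENNReal.ofReal (2 * φ y * Φ (k * y))) := by
  obtain rfl : φ = gaussianPDFReal 0 1 := by
    ext y
    simp [hφ, gaussianPDFReal]
  obtain rfl : Φ = cdf (gaussianReal 0 1) := by
    ext x
    simpa only [hΦ] using integral_Iic_gaussianPDFReal 0 one_ne_zero x
  have hclass : {ω | C ω = 1} = {ω | 0 ≤ X ω + k * Y ω} := by
    ext ω
    simp [hC]
  have hjoint (s : Set ℝ) (hs : MeasurableSet s) : P (Y ⁻¹' s ∩ {ω | C ω = 1}) =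
      ∫⁻ y in s, ENNReal.ofReal (gaussianPDFReal 0 1 y * cdf (gaussianReal 0 1) (k * y)) := by
    rw [hclass]
    exact measure_mem_and_nonneg_add_mul_gaussian hX hY hindep hXlaw hYlaw k hs
  have hhalf : P {ω | C ω = 1} = 1 / 2 := by
    have := nullSingletonClass_gaussianReal (μ := 0) one_ne_zero
    rw [hclass]
    exact measure_nonneg_add_mul_eq_half hX hY hindep hXlaw hYlaw
      (gaussianReal_zero_map_neg 1) (gaussianReal_zero_map_neg 1) k
  have hclass_meas : MeasurableSet {ω | C ω = 1} :=
    hclass ▸ measurableSet_le measurable_const (hX.add (hY.const_mul k))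
  refine ⟨fun t ↦ ?_, ?_⟩
  · rw [integral_eq_lintegral_of_nonneg_ae
      (ae_of_all _ fun y ↦ mul_nonneg (gaussianPDFReal_nonneg 0 1 y) (cdf_nonneg _ _))
      (measurable_gaussianPDFReal_mul_cdf k).aestronglyMeasurable]
    exact congrArg ENNReal.toReal (hjoint _ measurableSet_Iic)
  · rw [map_cond_eq_withDensity hY hclass_meas (measurable_gaussianPDFReal_mul_cdf k).ennreal_ofReal
      hjoint, hhalf]
    congr 1
    ext y
    rw [mul_assoc, ENNReal.ofReal_mul zero_le_two]
    norm_num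

theorem stmt_16 {Ω : Type*} [MeasurableSpace Ω] (P : Measure Ω) [IsProbabilityMeasure P]
    (k : ℝ) (hk : k ∈ Set.Icc (0 : ℝ) 1)
    (X Y : Ω → ℝ) (hX : Measurable X) (hY : Measurable Y)
    (hindep : IndepFun X Y P)
    (hXlaw : P.map X = gaussianReal 0 1) (hYlaw : P.map Y = gaussianReal 0 1)
    (C : Ω → ℕ) (hC : C = fun ω => if 0 ≤ X ω + k * Y ω then 1 else 0)
    (φ : ℝ → ℝ) (hφ : φ = fun y => (Real.sqrt (2 * Real.pi))⁻¹ * Real.exp (-(y ^ 2) / 2))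
    (Φ : ℝ → ℝ) (hΦ : Φ = fun x => ∫ y in Set.Iic x, φ y) :
    (∀ t : ℝ, (P {ω | Y ω ≤ t ∧ C ω = 1}).toReal = ∫ y in Set.Iic t, φ y * Φ (k * y)) ∧
      (ProbabilityTheory.cond P {ω | C ω = 1}).map Y
        = volume.withDensity (fun y => ENNReal.ofReal (2 * φ y * Φ (k * y))) :=
  stmt_16_general P k X Y hX hY hindep hXlaw hYlaw C hC φ hφ Φ hΦ
end

section
/- Let X, Y be independent standard normal random variables. Then MI(Y², X − Y) = −1 + (log 2)/2 + E[ log( cosh( (X − Y)·|Y| ) ) ], i.e., the KL divergence of the joint law of (Y², X − Y) from the product of the law of Y² and the law of X − Y equals −1 + (log 2)/2 plus the expectation of log cosh((X − Y)·|Y|). -/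
open MeasureTheory ProbabilityTheory Real
open scoped Classical

/-!
Given `Y² = u`, the sign of `Y` is a fair coin independent of `(|Y|, X)`, so `X - Y` is the equal
mixture of `N(-√u, 1)` and `N(√u, 1)`. Dividing the density of this mixture by that of `N(0, 2)`,
the law of `X - Y`, gives the density `√2 · exp (-v²/4 - u/2) · cosh (v √u)` of the joint law of
`(Y², X - Y)` with respect to the product of the marginals. The mutual information is the
expectation of its logarithm, `log 2 / 2 - (X - Y)² / 4 - Y² / 2 + log cosh ((X - Y) |Y|)`, and the
second moments `E[(X - Y)²] = 2`, `E[Y²] = 1` produce the constant `-1 + log 2 / 2`.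
-/

open scoped ENNReal NNReal

lemma klDiv_withDensity_ofReal {α : Type*} [MeasurableSpace α] {ν : Measure α} [SigmaFinite ν]
    {f : α → ℝ} (hf : Measurable f) (hf_nonneg : ∀ x, 0 ≤ f x)
    (hint : Integrable (fun x => log (f x)) (ν.withDensity fun x => ENNReal.ofReal (f x))) :
    klDiv (ν.withDensity fun x => ENNReal.ofReal (f x)) ν
      = ((∫ x, log (f x) ∂ν.withDensity fun x => ENNReal.ofReal (f x) : ℝ) : EReal) := by
  have hac : ν.withDensity (fun x => ENNReal.ofReal (f x)) ≪ ν :=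
    withDensity_absolutelyContinuous _ _
  have hllr : llr (ν.withDensity fun x => ENNReal.ofReal (f x)) ν
      =ᵐ[ν.withDensity fun x => ENNReal.ofReal (f x)] fun x => log (f x) := by
    filter_upwards [hac.ae_eq (Measure.rnDeriv_withDensity ν hf.ennreal_ofReal)] with x hx
    rw [llr, hx, ENNReal.toReal_ofReal (hf_nonneg x)]
  rw [klDiv, if_pos ⟨hac, hint.congr hllr.symm⟩, integral_congr_ae hllr]

lemma withDensity_map_prod_apply {α β γ : Type*} [MeasurableSpace α] [MeasurableSpace β]
    [MeasurableSpace γ] {μ : Measure α} {ν : Measure γ} [SFinite μ] [SFinite ν] {φ : α → β}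
    (hφ : Measurable φ) {F : β × γ → ℝ≥0∞} (hF : Measurable F) {s : Set (β × γ)}
    (hs : MeasurableSet s) :
    ((μ.map φ).prod ν).withDensity F s
      = ∫⁻ a, (ν.withDensity fun c => F (φ a, c)) (Prod.mk (φ a) ⁻¹' s) ∂μ := by
  have hprod : (μ.map φ).prod ν = (μ.prod ν).map (Prod.map φ id) := by
    rw [← Measure.map_prod_map _ _ hφ measurable_id, Measure.map_id]
  rw [withDensity_apply _ hs, ← lintegral_indicator hs, hprod,
    lintegral_map (hF.indicator hs) (hφ.prodMap measurable_id),
    lintegral_prod (fun z => s.indicator F (Prod.map φ id z))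
      ((hF.indicator hs).comp (hφ.prodMap measurable_id)).aemeasurable]
  refine lintegral_congr fun a => ?_
  rw [withDensity_apply _ (measurable_prodMk_left hs),
    ← lintegral_indicator (measurable_prodMk_left hs)]
  rfl

lemma log_cosh_le_abs (t : ℝ) : log (cosh t) ≤ |t| := by
  rw [log_le_iff_le_exp (cosh_pos t), ← cosh_abs, cosh_eq]
  have := exp_le_exp.2 (neg_le_self (abs_nonneg t))
  linarith

namespace ProbabilityTheory

lemma measurable_gaussianReal_apply_preimage_prodMk {m g : ℝ → ℝ} (hm : Measurable m)
    (hg : Measurable g) (v : ℝ≥0) {s : Set (ℝ × ℝ)} (hs : MeasurableSet s) :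
    Measurable fun y => gaussianReal (m y) v (Prod.mk (g y) ⁻¹' s) := by
  let κ : Kernel ℝ ℝ := ⟨fun y => gaussianReal (m y) v, by fun_prop⟩
  have : IsMarkovKernel κ := ⟨fun y => inferInstanceAs (IsProbabilityMeasure (gaussianReal _ _))⟩
  exact κ.measurable_kernel_prodMk_left (t := {p | (g p.1, p.2) ∈ s})
    ((hg.prodMap measurable_id) hs)

lemma gaussianReal_prod_map_sq_sub_apply (m : ℝ) (v : ℝ≥0) (μ : Measure ℝ) [SFinite μ]
    {s : Set (ℝ × ℝ)} (hs : MeasurableSet s) :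
    ((gaussianReal m v).prod μ).map (fun p => (p.2 ^ 2, p.1 - p.2)) s
      = ∫⁻ y, gaussianReal (m - y) v (Prod.mk (y ^ 2) ⁻¹' s) ∂μ := by
  have ht : Measurable fun p : ℝ × ℝ => (p.2 ^ 2, p.1 - p.2) := by fun_prop
  rw [Measure.map_apply ht hs, Measure.prod_apply_symm (ht hs)]
  refine lintegral_congr fun y => ?_
  rw [← gaussianReal_map_sub_const, Measure.map_apply (by fun_prop) (measurable_prodMk_left hs)]
  rfl

variable {Ω : Type*} {mΩ : MeasurableSpace Ω} {P : Measure Ω}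

lemma IndepFun.hasLaw_sub_gaussianReal {X Y : Ω → ℝ} {m₁ m₂ : ℝ} {v₁ v₂ : ℝ≥0}
    (hXY : IndepFun X Y P) (hX : HasLaw X (gaussianReal m₁ v₁) P)
    (hY : HasLaw Y (gaussianReal m₂ v₂) P) :
    HasLaw (fun ω => X ω - Y ω) (gaussianReal (m₁ - m₂) (v₁ + v₂)) P where
  aemeasurable := hX.aemeasurable.sub hY.aemeasurable
  map_eq := by
    have hsub : (fun ω => X ω - Y ω) = id ∘ X + Neg.neg ∘ Y := by
      funext ω
      simp [sub_eq_add_neg]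
    rw [hsub, gaussianReal_add_gaussianReal_of_indepFun (hXY.comp measurable_id measurable_neg)
      hX.map_eq (gaussianReal_neg hY).map_eq, sub_eq_add_neg]

lemma HasLaw.memLp_gaussianReal {V : Ω → ℝ} {m : ℝ} {v : ℝ≥0}
    (hV : HasLaw V (gaussianReal m v) P) (p : ℝ≥0∞) (hp : p ≠ ∞) : MemLp V p P := by
  have h := memLp_id_gaussianReal' (μ := m) (v := v) p hp
  rw [← hV.map_eq] at h
  exact (memLp_map_measure_iff aestronglyMeasurable_id hV.aemeasurable).mp h

lemma HasLaw.integral_sq_gaussianReal {V : Ω → ℝ} {v : ℝ≥0}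
    (hV : HasLaw V (gaussianReal 0 v) P) : ∫ ω, V ω ^ 2 ∂P = v := by
  have hmean : P[V] = 0 := by rw [hV.integral_eq, integral_id_gaussianReal]
  rw [← variance_of_integral_eq_zero hV.aemeasurable hmean, hV.variance_eq,
    variance_id_gaussianReal]

end ProbabilityTheory

lemma MeasureTheory.MemLp.integrable_log_cosh_mul_abs {Ω : Type*} {mΩ : MeasurableSpace Ω}
    {P : Measure Ω} {V Y : Ω → ℝ} (hV : MemLp V 2 P) (hY : MemLp Y 2 P) :
    Integrable (fun ω => log (cosh (V ω * |Y ω|))) P := by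
  have hprod : Integrable (fun ω => V ω * |Y ω|) P := hV.integrable_mul hY.abs
  refine hprod.abs.mono' ?_ (ae_of_all _ fun ω => ?_)
  · exact (continuous_cosh.log fun t => (cosh_pos t).ne').comp_aestronglyMeasurable
      hprod.aestronglyMeasurable
  · rw [norm_eq_abs, abs_of_nonneg (log_nonneg (one_le_cosh _))]
    exact log_cosh_le_abs _

noncomputable def sqSubDensity (p : ℝ × ℝ) : ℝ :=
  √2 * exp (-(p.2 ^ 2 / 4) - p.1 / 2) * cosh (p.2 * √p.1)

lemma sqSubDensity_nonneg (p : ℝ × ℝ) : 0 ≤ sqSubDensity p := by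
  have := cosh_pos (p.2 * √p.1)
  unfold sqSubDensity
  positivity

lemma measurable_sqSubDensity : Measurable sqSubDensity := by
  unfold sqSubDensity
  fun_prop

lemma log_sqSubDensity_sq (y v : ℝ) :
    log (sqSubDensity (y ^ 2, v))
      = log 2 / 2 - v ^ 2 / 4 - y ^ 2 / 2 + log (cosh (v * |y|)) := by
  rw [sqSubDensity, sqrt_sq_eq_abs, log_mul (by positivity) (cosh_pos _).ne',
    log_mul (by positivity) (exp_pos _).ne', log_exp, log_sqrt zero_le_two]
  ring

lemma gaussianPDFReal_mul_sqSubDensity (y v : ℝ) :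
    gaussianPDFReal 0 2 v * sqSubDensity (y ^ 2, v)
      = (gaussianPDFReal (-y) 1 v + gaussianPDFReal y 1 v) / 2 := by
  have hcosh : cosh (v * |y|) = cosh (v * y) := by
    rw [← cosh_abs, abs_mul, abs_abs, ← abs_mul, cosh_abs]
  have hsqrt : √(2 * π * 2) = √2 * √(2 * π) := by rw [mul_comm, sqrt_mul zero_le_two]
  have hexp (s : ℝ) (hs : s ^ 2 = 1) :
      exp (-(v - 0) ^ 2 / (2 * 2)) * exp (-(v ^ 2 / 4) - y ^ 2 / 2) * exp (s * (v * y))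
        = exp (-(v - s * y) ^ 2 / 2) := by
    rw [← exp_add, ← exp_add]
    congr 1
    linear_combination (y ^ 2 / 2) * hs
  have hplus := hexp 1 (one_pow 2)
  have hminus := hexp (-1) (by norm_num)
  simp only [one_mul, neg_mul] at hplus hminus
  simp only [gaussianPDFReal, sqSubDensity, sqrt_sq_eq_abs, hcosh, cosh_eq, NNReal.coe_one,
    NNReal.coe_ofNat, mul_one, hsqrt, ← hplus, ← hminus]
  have : √2 ≠ 0 := by positivity
  field_simp
  ring

lemma gaussianReal_withDensity_sqSubDensity (y : ℝ) :
    (gaussianReal 0 2).withDensity (fun v => ENNReal.ofReal (sqSubDensity (y ^ 2, v)))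
      = (2⁻¹ : ℝ≥0∞) • (gaussianReal (-y) 1 + gaussianReal y 1) := by
  have hmeas : Measurable fun v => ENNReal.ofReal (sqSubDensity (y ^ 2, v)) :=
    (measurable_sqSubDensity.comp measurable_prodMk_left).ennreal_ofReal
  rw [gaussianReal_of_var_ne_zero _ two_ne_zero, gaussianReal_of_var_ne_zero _ one_ne_zero,
    gaussianReal_of_var_ne_zero _ one_ne_zero, ← withDensity_mul _ (measurable_gaussianPDF _ _)
    hmeas, ← withDensity_add_left (measurable_gaussianPDF _ _), ← withDensity_smul _
    ((measurable_gaussianPDF _ _).add (measurable_gaussianPDF _ _))]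
  congr 1
  funext v
  simp only [Pi.mul_apply, Pi.add_apply, Pi.smul_apply, gaussianPDF, smul_eq_mul]
  rw [← ENNReal.ofReal_mul (gaussianPDFReal_nonneg _ _ _), gaussianPDFReal_mul_sqSubDensity,
    ← ENNReal.ofReal_add (gaussianPDFReal_nonneg _ _ _) (gaussianPDFReal_nonneg _ _ _),
    div_eq_inv_mul, ENNReal.ofReal_mul (by norm_num), ENNReal.ofReal_inv_of_pos two_pos,
    ENNReal.ofReal_ofNat]

lemma gaussianReal_prod_map_sq_sub :
    ((gaussianReal 0 1).prod (gaussianReal 0 1)).map (fun p => (p.2 ^ 2, p.1 - p.2))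
      = (((gaussianReal 0 1).map (· ^ 2)).prod (gaussianReal 0 2)).withDensity
          fun p => ENNReal.ofReal (sqSubDensity p) := by
  ext s hs
  have hsym : ∫⁻ y, gaussianReal y 1 (Prod.mk (y ^ 2) ⁻¹' s) ∂gaussianReal 0 1
      = ∫⁻ y, gaussianReal (-y) 1 (Prod.mk (y ^ 2) ⁻¹' s) ∂gaussianReal 0 1 := by
    have hneg : (gaussianReal 0 1).map (MeasurableEquiv.neg ℝ) = gaussianReal 0 1 := by
      simpa using gaussianReal_map_neg (μ := 0) (v := 1)
    conv_lhs => rw [← hneg, lintegral_map_equiv]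
    simp
  rw [gaussianReal_prod_map_sq_sub_apply _ _ _ hs,
    withDensity_map_prod_apply (by fun_prop) measurable_sqSubDensity.ennreal_ofReal hs]
  simp_rw [gaussianReal_withDensity_sqSubDensity, Measure.smul_apply, Measure.add_apply,
    smul_eq_mul, zero_sub]
  rw [lintegral_const_mul' _ _ (by simp), lintegral_add_left
    (measurable_gaussianReal_apply_preimage_prodMk measurable_neg (by fun_prop) 1 hs), hsym,
    ← two_mul, ← mul_assoc, ENNReal.inv_mul_cancel two_ne_zero ENNReal.ofNat_ne_top, one_mul]

section StandardGaussian

variable {Ω : Type*} {mΩ : MeasurableSpace Ω} {P : Measure Ω} [IsProbabilityMeasure P]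
  {X Y V : Ω → ℝ}

lemma ProbabilityTheory.IndepFun.map_sq_sub_eq_withDensity (hXY : IndepFun X Y P)
    (hX : HasLaw X (gaussianReal 0 1) P) (hY : HasLaw Y (gaussianReal 0 1) P) :
    P.map (fun ω => (Y ω ^ 2, X ω - Y ω))
      = ((P.map fun ω => Y ω ^ 2).prod (P.map fun ω => X ω - Y ω)).withDensity
          fun p => ENNReal.ofReal (sqSubDensity p) := by
  have hU : HasLaw (fun ω => Y ω ^ 2) ((gaussianReal 0 1).map (· ^ 2)) P :=
    HasLaw.fun_comp (Y := fun y : ℝ => y ^ 2) ⟨by fun_prop, rfl⟩ hY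
  have hV : P.map (fun ω => X ω - Y ω) = gaussianReal 0 2 := by
    simpa [one_add_one_eq_two] using (hXY.hasLaw_sub_gaussianReal hX hY).map_eq
  have hUV : HasLaw (fun ω => (Y ω ^ 2, X ω - Y ω))
      (((gaussianReal 0 1).prod (gaussianReal 0 1)).map fun p => (p.2 ^ 2, p.1 - p.2)) P :=
    HasLaw.fun_comp (Y := fun p : ℝ × ℝ => (p.2 ^ 2, p.1 - p.2)) ⟨by fun_prop, rfl⟩
      (hXY.hasLaw_prod hX hY)
  rw [hUV.map_eq, hU.map_eq, hV, gaussianReal_prod_map_sq_sub]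


lemma integrable_log_sqSubDensity (hY : HasLaw Y (gaussianReal 0 1) P)
    (hV : HasLaw V (gaussianReal 0 2) P) :
    Integrable (fun ω => log (sqSubDensity (Y ω ^ 2, V ω))) P := by
  have hY2 := hY.memLp_gaussianReal 2 (by simp)
  have hV2 := hV.memLp_gaussianReal 2 (by simp)
  simp_rw [log_sqSubDensity_sq]
  exact (((integrable_const _).sub (hV2.integrable_sq.div_const 4)).sub
    (hY2.integrable_sq.div_const 2)).add (hV2.integrable_log_cosh_mul_abs hY2)

lemma integral_log_sqSubDensity (hY : HasLaw Y (gaussianReal 0 1) P)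
    (hV : HasLaw V (gaussianReal 0 2) P) :
    ∫ ω, log (sqSubDensity (Y ω ^ 2, V ω)) ∂P
      = -1 + log 2 / 2 + ∫ ω, log (cosh (V ω * |Y ω|)) ∂P := by
  have hY2 := hY.memLp_gaussianReal 2 (by simp)
  have hV2 := hV.memLp_gaussianReal 2 (by simp)
  have hconst : Integrable (fun _ => log 2 / 2) P := integrable_const _
  have hV2' : Integrable (fun ω => V ω ^ 2 / 4) P := hV2.integrable_sq.div_const 4
  have hY2' : Integrable (fun ω => Y ω ^ 2 / 2) P := hY2.integrable_sq.div_const 2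
  have hconst_sub : Integrable (fun ω => log 2 / 2 - V ω ^ 2 / 4) P := hconst.sub hV2'
  have hpoly : Integrable (fun ω => log 2 / 2 - V ω ^ 2 / 4 - Y ω ^ 2 / 2) P :=
    hconst_sub.sub hY2'
  simp_rw [log_sqSubDensity_sq]
  rw [integral_add hpoly (hV2.integrable_log_cosh_mul_abs hY2), integral_sub hconst_sub hY2',
    integral_sub hconst hV2', integral_const, integral_div, integral_div,
    hV.integral_sq_gaussianReal, hY.integral_sq_gaussianReal]
  simp
  ring

end StandardGaussian

theorem stmt_19 {Ω : Type*} [MeasurableSpace Ω] (P : Measure Ω) [IsProbabilityMeasure P]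
    (X Y : Ω → ℝ) (hX : Measurable X) (hY : Measurable Y)
    (hindep : IndepFun X Y P)
    (hXlaw : P.map X = gaussianReal 0 1) (hYlaw : P.map Y = gaussianReal 0 1) :
    klDiv (P.map (fun ω => ((Y ω) ^ 2, X ω - Y ω)))
        ((P.map (fun ω => (Y ω) ^ 2)).prod (P.map (fun ω => X ω - Y ω)))
      = ((-1 + Real.log 2 / 2
            + ∫ ω, Real.log (Real.cosh ((X ω - Y ω) * |Y ω|)) ∂P : ℝ) : EReal) := by
  have hXlaw' : HasLaw X (gaussianReal 0 1) P := ⟨hX.aemeasurable, hXlaw⟩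
  have hYlaw' : HasLaw Y (gaussianReal 0 1) P := ⟨hY.aemeasurable, hYlaw⟩
  have hV : HasLaw (fun ω => X ω - Y ω) (gaussianReal 0 2) P := by
    simpa [one_add_one_eq_two] using hindep.hasLaw_sub_gaussianReal hXlaw' hYlaw'
  have hjoint := hindep.map_sq_sub_eq_withDensity hXlaw' hYlaw'
  have hmeas : Measurable fun ω => (Y ω ^ 2, X ω - Y ω) := by fun_prop
  have hlog : AEStronglyMeasurable (fun p => log (sqSubDensity p))
      (P.map fun ω => (Y ω ^ 2, X ω - Y ω)) :=
    (measurable_log.comp measurable_sqSubDensity).aestronglyMeasurable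
  have hint := (integrable_map_measure hlog hmeas.aemeasurable).mpr
    (integrable_log_sqSubDensity hYlaw' hV)
  rw [hjoint] at hint ⊢
  rw [klDiv_withDensity_ofReal measurable_sqSubDensity sqSubDensity_nonneg hint, ← hjoint,
    integral_map hmeas.aemeasurable hlog, integral_log_sqSubDensity hYlaw' hV]
end
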